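/- Let g₁, g₂ : F_q^d → Ω be scalar respecting, and suppose Pr_{α,β}[g₁(α)g₂(β) = g₂(α+β)] ≥ ε where ε > 2/q. Then there exists ρ ∈ F_q^d with ĝ₁(ρ) ≥ (ε - 1/q)·q/(q-1). -/

import Mathlib

open scoped Classical
open Finset Complex

noncomputable def omegaC (q : ℕ) : ℂ := Complex.exp (2 * Real.pi * Complex.I / q)

noncomputable def chiC (q d : ℕ) (ρ α : Fin d → ZMod q) : ℂ :=
  omegaC q ^ (∑ i, ρ i * α i).val

noncomputable def hatC (q d : ℕ) [NeZero q] (g : (Fin d → ZMod q) → ℂ)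
    (ρ : Fin d → ZMod q) : ℂ :=
  (∑ α : Fin d → ZMod q, g α * (starRingEnd ℂ) (chiC q d ρ α)) / (q : ℂ) ^ d

set_option linter.unusedSectionVars false
set_option linter.unusedVariables false
set_option maxHeartbeats 1000000

section AuxProof

variable (q : ℕ) [Fact q.Prime]

lemma omega_prim : IsPrimitiveRoot (omegaC q) q :=
  Complex.isPrimitiveRoot_exp q (Fact.out : q.Prime).ne_zero

lemma two_le_q : 2 ≤ q := (Fact.out : q.Prime).two_le

lemma omega_pow_q : omegaC q ^ q = 1 := (omega_prim q).pow_eq_one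

noncomputable def eZ (x : ZMod q) : ℂ := omegaC q ^ x.val

lemma eZ_add (x y : ZMod q) : eZ q (x + y) = eZ q x * eZ q y := by
  unfold eZ
  rw [← pow_add, ZMod.val_add]
  conv_rhs => rw [← Nat.div_add_mod (x.val + y.val) q, pow_add, pow_mul, omega_pow_q, one_pow,
    one_mul]

lemma eZ_zero : eZ q 0 = 1 := by simp [eZ]

lemma abs_omega : ‖omegaC q‖ = 1 := by
  have h : (2 * (Real.pi:ℂ) * Complex.I / q) = ((2 * Real.pi / q : ℝ)) * Complex.I := by
    push_cast; ring
  rw [omegaC, h, Complex.norm_exp]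
  simp

lemma abs_eZ (x : ZMod q) : ‖eZ q x‖ = 1 := by
  rw [eZ, norm_pow, abs_omega, one_pow]

lemma conj_eZ (x : ZMod q) : (starRingEnd ℂ) (eZ q x) = eZ q (-x) := by
  have h1 : eZ q x * eZ q (-x) = 1 := by rw [← eZ_add]; simp [eZ_zero]
  rw [← Complex.inv_eq_conj (abs_eZ q x)]
  exact inv_eq_of_mul_eq_one_right h1

lemma eZ_eq_one_iff (x : ZMod q) : eZ q x = 1 ↔ x = 0 := by
  constructor
  · intro h
    have hd := ((omega_prim q).pow_eq_one_iff_dvd x.val).mp h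
    exact (ZMod.val_eq_zero x).mp (Nat.eq_zero_of_dvd_of_lt hd (ZMod.val_lt x))
  · rintro rfl; exact eZ_zero q

lemma sum_eZ : ∑ x : ZMod q, eZ q x = 0 := by
  have h1 : ∑ x : ZMod q, eZ q x = ∑ k ∈ Finset.range q, omegaC q ^ k := by
    refine Finset.sum_nbij' (fun x => x.val) (fun k => (k : ZMod q)) ?_ ?_ ?_ ?_ ?_
    · intro a _; exact Finset.mem_range.mpr (ZMod.val_lt a)
    · intro a _; exact Finset.mem_univ _
    · intro a _; exact ZMod.natCast_rightInverse a
    · intro a ha; exact ZMod.val_natCast_of_lt (Finset.mem_range.mp ha)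
    · intro a _; rfl
  rw [h1]
  exact (omega_prim q).geom_sum_eq_zero (lt_of_lt_of_le one_lt_two (two_le_q q))

lemma sum_eZ_mul {c : ZMod q} (hc : c ≠ 0) : ∑ a : ZMod q, eZ q (c * a) = 0 :=
  (Fintype.sum_bijective (fun a => c * a) (mulLeft_bijective₀ c hc) _ _ (fun _ => rfl)).trans
    (sum_eZ q)

lemma sum_eZ_if (c : ZMod q) :
    ∑ a : ZMod q, eZ q (c * a) = if c = 0 then (q : ℂ) else 0 := by
  split_ifs with hc
  · subst hc; simp [eZ_zero]
  · exact sum_eZ_mul q hc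

variable (d : ℕ)

lemma eZ_sum {ι : Type*} (s : Finset ι) (f : ι → ZMod q) :
    eZ q (∑ i ∈ s, f i) = ∏ i ∈ s, eZ q (f i) := by
  classical
  induction s using Finset.cons_induction with
  | empty => simpa using eZ_zero q
  | cons a s ha ih => rw [Finset.sum_cons, Finset.prod_cons, eZ_add, ih]

variable (d : ℕ)

lemma chi_def (ρ α : Fin d → ZMod q) : chiC q d ρ α = eZ q (∑ i, ρ i * α i) := rfl

lemma chi_comm (ρ α : Fin d → ZMod q) : chiC q d ρ α = chiC q d α ρ := by
  simp [chiC, mul_comm]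

lemma chi_add (ρ α β : Fin d → ZMod q) :
    chiC q d ρ (α + β) = chiC q d ρ α * chiC q d ρ β := by
  rw [chi_def, chi_def, chi_def, ← eZ_add]
  congr 1
  simp [mul_add, Finset.sum_add_distrib]

lemma chi_conj (ρ α : Fin d → ZMod q) :
    (starRingEnd ℂ) (chiC q d ρ α) = chiC q d ρ (-α) := by
  rw [chi_def, conj_eZ, chi_def]
  congr 1
  simp [Finset.sum_neg_distrib]

lemma sum_chi (τ : Fin d → ZMod q) :
    ∑ α : Fin d → ZMod q, chiC q d τ α = if τ = 0 then (q : ℂ) ^ d else 0 := by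
  have h1 : ∑ α : Fin d → ZMod q, chiC q d τ α = ∏ i, ∑ a : ZMod q, eZ q (τ i * a) := by
    rw [Finset.prod_univ_sum]
    rw [Fintype.piFinset_univ]
    exact Finset.sum_congr rfl fun α _ => (chi_def q d τ α).trans (eZ_sum q _ _)
  rw [h1]
  split_ifs with hτ
  · subst hτ
    simp only [Pi.zero_apply, zero_mul]
    have : ∀ i : Fin d, (True) := fun _ => trivial
    calc ∏ _i : Fin d, ∑ _a : ZMod q, eZ q 0 = ∏ _i : Fin d, (q : ℂ) := by
          refine Finset.prod_congr rfl fun i _ => ?_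
          simpa using (sum_eZ_if q 0)
      _ = (q : ℂ) ^ d := by simp
  · obtain ⟨i, hi⟩ : ∃ i, τ i ≠ 0 := by
      by_contra h; push_neg at h; exact hτ (funext h)
    refine Finset.prod_eq_zero (Finset.mem_univ i) ?_
    rw [sum_eZ_if, if_neg hi]

lemma sum_chi_left (α : Fin d → ZMod q) :
    ∑ ρ : Fin d → ZMod q, chiC q d ρ α = if α = 0 then (q : ℂ) ^ d else 0 := by
  simp_rw [chi_comm q d _ α]
  exact sum_chi q d α

lemma qC_ne : ((q : ℂ) ^ d) ≠ 0 :=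
  pow_ne_zero _ (Nat.cast_ne_zero.mpr (Fact.out : q.Prime).ne_zero)

lemma chi_combo (ρ α β γ : Fin d → ZMod q) :
    (starRingEnd ℂ) (chiC q d ρ α) * (starRingEnd ℂ) (chiC q d ρ β) * chiC q d ρ γ
      = chiC q d ρ (γ - α - β) := by
  rw [chi_conj, chi_conj, show γ - α - β = -α + (-β + γ) by abel, chi_add, chi_add]
  ring

lemma conj_hat (g : (Fin d → ZMod q) → ℂ) (ρ : Fin d → ZMod q) :
    (starRingEnd ℂ) (hatC q d g ρ)
      = (∑ γ : Fin d → ZMod q, (starRingEnd ℂ) (g γ) * chiC q d ρ γ) / (q : ℂ) ^ d := by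
  rw [hatC, map_div₀, map_sum]
  congr 1
  · exact Finset.sum_congr rfl fun γ _ => by rw [map_mul, Complex.conj_conj]
  · rw [map_pow, Complex.conj_natCast]

lemma key_fourier (g₁ g₂ : (Fin d → ZMod q) → ℂ) :
    ∑ ρ : Fin d → ZMod q, hatC q d g₁ ρ * (hatC q d g₂ ρ * (starRingEnd ℂ) (hatC q d g₂ ρ))
      = (∑ α : Fin d → ZMod q, ∑ β : Fin d → ZMod q,
          g₁ α * g₂ β * (starRingEnd ℂ) (g₂ (α + β))) / ((q : ℂ) ^ d) ^ 2 := by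
  set N : ℂ := (q : ℂ) ^ d with hNdef
  have hN : N ≠ 0 := qC_ne q d
  have stepA : ∀ ρ : Fin d → ZMod q,
      hatC q d g₁ ρ * (hatC q d g₂ ρ * (starRingEnd ℂ) (hatC q d g₂ ρ))
        = (∑ α : Fin d → ZMod q, ∑ β : Fin d → ZMod q, ∑ γ : Fin d → ZMod q,
            g₁ α * g₂ β * (starRingEnd ℂ) (g₂ γ) * chiC q d ρ (γ - α - β)) / N ^ 3 := by
    intro ρ
    rw [conj_hat, hatC, hatC]
    rw [div_mul_div_comm, div_mul_div_comm]
    congr 1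
    · refine Eq.symm ?_
      have h1 : ∀ α β γ : Fin d → ZMod q,
          g₁ α * g₂ β * (starRingEnd ℂ) (g₂ γ) * chiC q d ρ (γ - α - β)
          = (g₁ α * (starRingEnd ℂ) (chiC q d ρ α)) *
            ((g₂ β * (starRingEnd ℂ) (chiC q d ρ β)) *
              ((starRingEnd ℂ) (g₂ γ) * chiC q d ρ γ)) := by
        intro α β γ
        rw [← chi_combo q d ρ α β γ]
        ring
      simp_rw [h1, ← Finset.mul_sum, ← Finset.sum_mul]
    · ring
  rw [Finset.sum_congr rfl fun ρ _ => stepA ρ, ← Finset.sum_div]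
  have hswap : ∑ ρ : Fin d → ZMod q, ∑ α : Fin d → ZMod q, ∑ β : Fin d → ZMod q,
      ∑ γ : Fin d → ZMod q, g₁ α * g₂ β * (starRingEnd ℂ) (g₂ γ) * chiC q d ρ (γ - α - β)
      = (∑ α : Fin d → ZMod q, ∑ β : Fin d → ZMod q,
          g₁ α * g₂ β * (starRingEnd ℂ) (g₂ (α + β))) * N := by
    rw [Finset.sum_comm]
    rw [Finset.sum_mul]
    refine Finset.sum_congr rfl fun α _ => ?_
    rw [Finset.sum_comm, Finset.sum_mul]
    refine Finset.sum_congr rfl fun β _ => ?_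
    rw [Finset.sum_comm]
    have : ∀ γ : Fin d → ZMod q,
        ∑ ρ : Fin d → ZMod q, g₁ α * g₂ β * (starRingEnd ℂ) (g₂ γ) * chiC q d ρ (γ - α - β)
        = if γ = α + β then g₁ α * g₂ β * (starRingEnd ℂ) (g₂ γ) * N else 0 := by
      intro γ
      rw [← Finset.mul_sum, sum_chi_left]
      by_cases h : γ = α + β
      · rw [if_pos (by rw [h]; abel), if_pos h]
      · rw [if_neg (fun hh => h (by rwa [sub_sub, sub_eq_zero] at hh)), if_neg h, mul_zero]
    rw [Finset.sum_congr rfl fun γ _ => this γ, Finset.sum_ite_eq' Finset.univ (α + β)]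
    simp
  rw [hswap, show N ^ 3 = N * N ^ 2 by ring, ← div_div, mul_div_cancel_right₀ _ hN]

lemma chi_zero (ρ : Fin d → ZMod q) : chiC q d ρ 0 = 1 := by
  simp [chiC]

lemma chi_combo2 (ρ α γ : Fin d → ZMod q) :
    (starRingEnd ℂ) (chiC q d ρ α) * chiC q d ρ γ = chiC q d ρ (γ - α) := by
  rw [chi_conj, ← chi_add, show -α + γ = γ - α by abel]

lemma parseval (g : (Fin d → ZMod q) → ℂ) (hg : ∀ α, g α * (starRingEnd ℂ) (g α) = 1) :
    ∑ ρ : Fin d → ZMod q, hatC q d g ρ * (starRingEnd ℂ) (hatC q d g ρ) = 1 := by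
  set N : ℂ := (q : ℂ) ^ d with hNdef
  have hN : N ≠ 0 := qC_ne q d
  have stepA : ∀ ρ : Fin d → ZMod q,
      hatC q d g ρ * (starRingEnd ℂ) (hatC q d g ρ)
        = (∑ α : Fin d → ZMod q, ∑ γ : Fin d → ZMod q,
            g α * (starRingEnd ℂ) (g γ) * chiC q d ρ (γ - α)) / N ^ 2 := by
    intro ρ
    rw [conj_hat, hatC, div_mul_div_comm]
    congr 1
    · refine Eq.symm ?_
      have h1 : ∀ α γ : Fin d → ZMod q,
          g α * (starRingEnd ℂ) (g γ) * chiC q d ρ (γ - α)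
          = (g α * (starRingEnd ℂ) (chiC q d ρ α)) *
            ((starRingEnd ℂ) (g γ) * chiC q d ρ γ) := by
        intro α γ
        rw [← chi_combo2 q d ρ α γ]
        ring
      simp_rw [h1, ← Finset.mul_sum, ← Finset.sum_mul]
    · ring
  rw [Finset.sum_congr rfl fun ρ _ => stepA ρ, ← Finset.sum_div]
  have hswap : ∑ ρ : Fin d → ZMod q, ∑ α : Fin d → ZMod q, ∑ γ : Fin d → ZMod q,
      g α * (starRingEnd ℂ) (g γ) * chiC q d ρ (γ - α) = N * N := by
    rw [Finset.sum_comm]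
    have hα : ∀ α : Fin d → ZMod q, ∑ ρ : Fin d → ZMod q, ∑ γ : Fin d → ZMod q,
        g α * (starRingEnd ℂ) (g γ) * chiC q d ρ (γ - α) = N := by
      intro α
      rw [Finset.sum_comm]
      have hγ : ∀ γ : Fin d → ZMod q,
          ∑ ρ : Fin d → ZMod q, g α * (starRingEnd ℂ) (g γ) * chiC q d ρ (γ - α)
          = if γ = α then N else 0 := by
        intro γ
        rw [← Finset.mul_sum, sum_chi_left]
        by_cases h : γ = α
        · rw [if_pos (by rw [h]; abel), if_pos h, h, hg, one_mul]
        · rw [if_neg (fun hh => h (by rwa [sub_eq_zero] at hh)), if_neg h, mul_zero]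
      rw [Finset.sum_congr rfl fun γ _ => hγ γ, Finset.sum_ite_eq' Finset.univ α]
      simp
    rw [Finset.sum_congr rfl fun α _ => hα α, Finset.sum_const, Finset.card_univ]
    have hcard : (Fintype.card (Fin d → ZMod q) : ℂ) = N := by
      simp [hNdef, ZMod.card]
    rw [nsmul_eq_mul, hcard]
  rw [hswap, show N * N = N ^ 2 by ring, div_self (pow_ne_zero 2 hN)]

lemma omega_mul_conj (k : ℕ) :
    omegaC q ^ k * (starRingEnd ℂ) (omegaC q ^ k) = 1 := by
  rw [Complex.mul_conj, ← Complex.ofReal_one]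
  congr 1
  rw [Complex.normSq_eq_norm_sq, norm_pow, abs_omega, one_pow, one_pow]


end AuxProof

theorem stmt_4 (q d : ℕ) [Fact q.Prime]
    (g₁ g₂ : (Fin d → ZMod q) → ℂ)
    (hΩ₁ : ∀ α, ∃ k : ℕ, g₁ α = omegaC q ^ k)
    (hΩ₂ : ∀ α, ∃ k : ℕ, g₂ α = omegaC q ^ k)
    (hscal₁ : ∀ (j : ZMod q) (α : Fin d → ZMod q), g₁ (j • α) = g₁ α ^ j.val)
    (hscal₂ : ∀ (j : ZMod q) (α : Fin d → ZMod q), g₂ (j • α) = g₂ α ^ j.val)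
    (ε : ℝ) (hε : ε > 2 / q)
    (hpass : ε ≤ ((Finset.univ.filter fun p : (Fin d → ZMod q) × (Fin d → ZMod q) =>
        g₁ p.1 * g₂ p.2 = g₂ (p.1 + p.2)).card : ℝ) / (q : ℝ) ^ (2 * d)) :
    ∃ ρ : Fin d → ZMod q, (ε - 1 / q) * q / (q - 1) ≤ (hatC q d g₁ ρ).re := by
  have hq2 : 2 ≤ q := two_le_q q
  have hq0 : (0 : ℝ) < (q : ℝ) := by positivity
  have hunit₂ : ∀ α, g₂ α * (starRingEnd ℂ) (g₂ α) = 1 := by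
    intro α; obtain ⟨k, hk⟩ := hΩ₂ α; rw [hk]; exact omega_mul_conj q k
  set P := (Finset.univ.filter fun p : (Fin d → ZMod q) × (Fin d → ZMod q) =>
    g₁ p.1 * g₂ p.2 = g₂ (p.1 + p.2)) with hP
  set F : (Fin d → ZMod q) × (Fin d → ZMod q) → ℂ :=
    fun p => g₁ p.1 * g₂ p.2 * (starRingEnd ℂ) (g₂ (p.1 + p.2)) with hF
  set Sig0 : ℂ := ∑ α : Fin d → ZMod q, ∑ β : Fin d → ZMod q,
    g₁ α * g₂ β * (starRingEnd ℂ) (g₂ (α + β)) with hSig0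
  have hprod : ∑ p : (Fin d → ZMod q) × (Fin d → ZMod q), F p = Sig0 :=
    Fintype.sum_prod_type F
  -- F is a q-th root of unity
  have hFroot : ∀ p : (Fin d → ZMod q) × (Fin d → ZMod q), F p ^ q = 1 := by
    intro p
    obtain ⟨k₁, h1⟩ := hΩ₁ p.1
    obtain ⟨k₂, h2⟩ := hΩ₂ p.2
    obtain ⟨k₃, h3⟩ := hΩ₂ (p.1 + p.2)
    rw [hF]; simp only
    rw [h1, h2, h3, mul_pow, mul_pow, ← map_pow]
    rw [show (omegaC q ^ k₁) ^ q = (omegaC q ^ q) ^ k₁ by rw [← pow_mul, ← pow_mul, mul_comm]]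
    rw [show (omegaC q ^ k₂) ^ q = (omegaC q ^ q) ^ k₂ by rw [← pow_mul, ← pow_mul, mul_comm]]
    rw [show (omegaC q ^ k₃) ^ q = (omegaC q ^ q) ^ k₃ by rw [← pow_mul, ← pow_mul, mul_comm]]
    rw [omega_pow_q]
    simp
  have hFiff : ∀ p : (Fin d → ZMod q) × (Fin d → ZMod q),
      F p = 1 ↔ g₁ p.1 * g₂ p.2 = g₂ (p.1 + p.2) := by
    intro p
    constructor
    · intro h
      calc g₁ p.1 * g₂ p.2
          = g₁ p.1 * g₂ p.2 * (g₂ (p.1 + p.2) * (starRingEnd ℂ) (g₂ (p.1 + p.2))) := by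
            rw [hunit₂, mul_one]
        _ = g₂ (p.1 + p.2) * F p := by rw [hF]; ring
        _ = g₂ (p.1 + p.2) := by rw [h, mul_one]
    · intro h
      rw [hF]; simp only
      rw [h]; exact hunit₂ _
  -- counting identity
  have key_count : (q : ℂ) * (P.card : ℂ) = (q : ℂ) ^ (2 * d) + ((q : ℂ) - 1) * Sig0 := by
    have step1 : ∀ p : (Fin d → ZMod q) × (Fin d → ZMod q),
        (if g₁ p.1 * g₂ p.2 = g₂ (p.1 + p.2) then (q : ℂ) else 0)
          = ∑ j ∈ Finset.range q, F p ^ j := by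
      intro p
      split_ifs with h
      · rw [Finset.sum_congr rfl fun j _ => by rw [(hFiff p).mpr h, one_pow]]
        simp
      · have hF1 : F p ≠ 1 := fun hh => h ((hFiff p).mp hh)
        rw [geom_sum_eq hF1, hFroot, sub_self, zero_div]
    have step2 : ∑ p : (Fin d → ZMod q) × (Fin d → ZMod q),
        (if g₁ p.1 * g₂ p.2 = g₂ (p.1 + p.2) then (q : ℂ) else 0)
        = (q : ℂ) * (P.card : ℂ) := by
      rw [Finset.sum_ite, Finset.sum_const, Finset.sum_const_zero, add_zero, nsmul_eq_mul,
        mul_comm]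
    rw [← step2, Finset.sum_congr rfl fun p _ => step1 p, Finset.sum_comm]
    -- now: ∑ j ∈ range q, ∑ p, F p ^ j
    have hS0 : ∑ p : (Fin d → ZMod q) × (Fin d → ZMod q), F p ^ 0 = (q : ℂ) ^ (2 * d) := by
      simp only [pow_zero]
      rw [Finset.sum_const, Finset.card_univ, nsmul_eq_mul, mul_one]
      have hcV : Fintype.card ((Fin d → ZMod q) × (Fin d → ZMod q)) = q ^ (2 * d) := by
        rw [Fintype.card_prod]
        simp only [Fintype.card_fun, ZMod.card, Fintype.card_fin]
        rw [← pow_add, two_mul]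
      rw [hcV]; push_cast; ring
    have hSsucc : ∀ j : ℕ, 1 ≤ j → j < q →
        ∑ p : (Fin d → ZMod q) × (Fin d → ZMod q), F p ^ j = Sig0 := by
      intro j hj1 hjq
      set c : ZMod q := (j : ZMod q) with hc
      have hcv : c.val = j := ZMod.val_natCast_of_lt hjq
      have hc0 : c ≠ 0 := by
        intro h
        rw [h, ZMod.val_zero] at hcv
        omega
      have hpt : ∀ p : (Fin d → ZMod q) × (Fin d → ZMod q), F p ^ j
          = g₁ (c • p.1) * g₂ (c • p.2) * (starRingEnd ℂ) (g₂ (c • p.1 + c • p.2)) := by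
        intro p
        rw [hF]; simp only
        rw [mul_pow, mul_pow, ← map_pow]
        rw [← hcv, ← hscal₁ c p.1, ← hscal₂ c p.2, ← hscal₂ c (p.1 + p.2), smul_add]
      rw [Finset.sum_congr rfl fun p _ => hpt p]
      have hbij : Function.Bijective (fun α : Fin d → ZMod q => c • α) := by
        set u : (ZMod q)ˣ := Units.mk0 c hc0 with hu
        have h2 : Function.Bijective (fun α : Fin d → ZMod q => u • α) := MulAction.bijective u
        simpa [Units.smul_def, hu, Units.val_mk0] using h2
      have hb2 := Fintype.sum_bijective
        (fun p : (Fin d → ZMod q) × (Fin d → ZMod q) => (c • p.1, c • p.2))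
        (hbij.prodMap hbij)
        (fun p : (Fin d → ZMod q) × (Fin d → ZMod q) => g₁ (c • p.1) * g₂ (c • p.2) *
          (starRingEnd ℂ) (g₂ (c • p.1 + c • p.2)))
        F
        (fun p => rfl)
      rw [hb2, hprod]
    have hq1 : Finset.range q = Finset.range (q - 1 + 1) := by
      congr 1; omega
    rw [hq1, Finset.sum_range_succ']
    rw [Finset.sum_congr rfl fun i hi => hSsucc (i + 1) (by omega)
      (by have := Finset.mem_range.mp hi; omega)]
    rw [Finset.sum_const, Finset.card_range, nsmul_eq_mul, hS0]
    have hcast : ((q - 1 : ℕ) : ℂ) = (q : ℂ) - 1 := by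
      push_cast [Nat.cast_sub (by omega : 1 ≤ q)]; ring
    rw [hcast]; ring
  -- real-part setup
  set w : (Fin d → ZMod q) → ℝ := fun ρ => Complex.normSq (hatC q d g₂ ρ) with hw
  have hwnn : ∀ ρ, 0 ≤ w ρ := fun ρ => Complex.normSq_nonneg _
  have hwsum : ∑ ρ : Fin d → ZMod q, w ρ = 1 := by
    have hpv := parseval q d g₂ hunit₂
    have h2 : ∑ ρ : Fin d → ZMod q, hatC q d g₂ ρ * (starRingEnd ℂ) (hatC q d g₂ ρ)
        = ((∑ ρ : Fin d → ZMod q, w ρ : ℝ) : ℂ) := by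
      push_cast
      exact Finset.sum_congr rfl fun ρ _ => by rw [Complex.mul_conj]
    rw [h2] at hpv
    exact_mod_cast hpv
  have hmain : ∑ ρ : Fin d → ZMod q, (hatC q d g₁ ρ).re * w ρ
      = Sig0.re / (q : ℝ) ^ (2 * d) := by
    have hkf := key_fourier q d g₁ g₂
    have hL : ∑ ρ : Fin d → ZMod q,
        hatC q d g₁ ρ * (hatC q d g₂ ρ * (starRingEnd ℂ) (hatC q d g₂ ρ))
        = ∑ ρ : Fin d → ZMod q, hatC q d g₁ ρ * ((w ρ : ℝ) : ℂ) :=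
      Finset.sum_congr rfl fun ρ _ => by rw [Complex.mul_conj]
    rw [hL, ← hSig0] at hkf
    have hre := congrArg Complex.re hkf
    rw [Complex.re_sum] at hre
    rw [Finset.sum_congr rfl fun ρ _ => by
      rw [mul_comm (hatC q d g₁ ρ), Complex.re_ofReal_mul, mul_comm]] at hre
    rw [hre]
    have hden : ((q : ℂ) ^ d) ^ 2 = (((q : ℝ) ^ (2 * d) : ℝ) : ℂ) := by
      push_cast
      rw [← pow_mul, mul_comm]
    rw [hden, Complex.div_ofReal_re]
  -- numeric bounds
  have hQ : (2 : ℝ) ≤ (q : ℝ) := by exact_mod_cast hq2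
  have hQpow : (0 : ℝ) < (q : ℝ) ^ (2 * d) := by positivity
  have hcard : ε * (q : ℝ) ^ (2 * d) ≤ (P.card : ℝ) := by
    calc ε * (q : ℝ) ^ (2 * d) ≤ ((P.card : ℝ) / (q : ℝ) ^ (2 * d)) * (q : ℝ) ^ (2 * d) :=
          mul_le_mul_of_nonneg_right hpass (le_of_lt hQpow)
      _ = (P.card : ℝ) := by field_simp
  have hre_count : (q : ℝ) * (P.card : ℝ)
      = (q : ℝ) ^ (2 * d) + ((q : ℝ) - 1) * Sig0.re := by
    have h := key_count
    rw [show (q : ℂ) ^ (2 * d) = (((q : ℝ) ^ (2 * d) : ℝ) : ℂ) by push_cast; ring,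
      show ((q : ℂ) - 1) = ((((q : ℝ) - 1 : ℝ)) : ℂ) by push_cast; ring,
      show (q : ℂ) * (P.card : ℂ) = ((((q : ℝ) * P.card : ℝ)) : ℂ) by push_cast; ring] at h
    have h2 := congrArg Complex.re h
    rwa [Complex.add_re, Complex.ofReal_re, Complex.re_ofReal_mul, Complex.ofReal_re] at h2
  have hbound : (ε - 1 / q) * q / (q - 1) ≤ Sig0.re / (q : ℝ) ^ (2 * d) := by
    rw [div_le_div_iff₀ (by linarith) hQpow]
    have h1 : (ε - 1 / (q : ℝ)) * (q : ℝ) = ε * q - 1 := by field_simp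
    rw [h1]
    have h2 : (q : ℝ) * (ε * (q : ℝ) ^ (2 * d)) ≤ (q : ℝ) * (P.card : ℝ) :=
      mul_le_mul_of_nonneg_left hcard (le_of_lt hq0)
    nlinarith [hre_count, h2]
  by_contra hcon
  push_neg at hcon
  obtain ⟨ρ₀, hρ₀⟩ : ∃ ρ : Fin d → ZMod q, w ρ ≠ 0 := by
    by_contra hall
    push_neg at hall
    rw [Finset.sum_congr rfl fun ρ _ => hall ρ] at hwsum
    simp at hwsum
  have hlt : ∑ ρ : Fin d → ZMod q, (hatC q d g₁ ρ).re * w ρ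
      < ∑ ρ : Fin d → ZMod q, ((ε - 1 / q) * q / (q - 1)) * w ρ := by
    apply Finset.sum_lt_sum
    · intro ρ _
      exact mul_le_mul_of_nonneg_right (le_of_lt (hcon ρ)) (hwnn ρ)
    · exact ⟨ρ₀, Finset.mem_univ _,
        mul_lt_mul_of_pos_right (hcon ρ₀) (lt_of_le_of_ne (hwnn ρ₀) (Ne.symm hρ₀))⟩
  rw [← Finset.mul_sum, hwsum, mul_one, hmain] at hlt
  exact absurd hbound (not_le.mpr hlt)
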